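/- arXiv:2405.08738 — 2 statements merged into one kernel-verified Lean document; each statement's English description precedes it below -/
import Mathlib

section
/- Under the conditions of the previous Leibniz-rule lemma, and with θ in the interior of the support of Y so that both E[(Y−θ)1(Y>θ)] and E[(θ−Y)1(θ>Y)] are positive, the function t(θ) = E[(Y−θ)1(Y>θ) | A=1, X=x] / E[(θ−Y)1(θ>Y) | A=1, X=x] is differentiable with strictly negative derivative: t'(θ) = −[E[(θ−Y)1(θ>Y)]·P(Y>θ) + E[(Y−θ)1(Y>θ)]·P(Y≤θ)] / [E[(θ−Y)1(θ>Y)]]², where all expectations and probabilities condition on A = 1, X = x. Consequently t(θ) is strictly decreasing and, by the inverse function theorem, its inverse θ(t) is differentiable with ∂θ/∂t = −f₁(θ)² / g₁(θ), where f₁(θ) = E[(θ−Y)1(θ>Y)] and g₁(θ) = f₁(θ)·P(Y>θ) + E[(Y−θ)1(Y>θ)]·P(Y<θ). -/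
/-!
Write `f₁(ϑ) = ∫ (ϑ - y)⁺ dν` and `e₁(ϑ) = ∫ (y - ϑ)⁺ dν`. Both integrands are 1-Lipschitz in `ϑ`
and differentiable in `ϑ` at `θ` unless `y = θ`, a `ν`-null point because `ν` has a density, so
differentiating under the integral gives `f₁'(θ) = ν(Y < θ)` and `e₁'(θ) = -ν(Y > θ)`.
The quotient rule then gives `t'(θ)`, which is negative because `f₁(θ)`, `e₁(θ)` and both tail
masses are positive, and the one-variable inverse function theorem gives the derivative of the
local inverse.
-/

open MeasureTheory Set Filter

open scoped NNReal

theorem hasDerivAt_max_zero {x : ℝ} (hx : x ≠ 0) :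
    HasDerivAt (fun x => max x 0) ((Ioi 0).indicator 1 x) x := by
  rcases hx.lt_or_gt with hx | hx
  · rw [indicator_of_notMem (show x ∉ Ioi 0 from not_lt.2 hx.le)]
    exact (hasDerivAt_const x 0).congr_of_eventuallyEq
      ((gt_mem_nhds hx).mono fun y hy => max_eq_right hy.le)
  · rw [indicator_of_mem (show x ∈ Ioi 0 from hx), Pi.one_apply]
    exact (hasDerivAt_id x).congr_of_eventuallyEq
      ((lt_mem_nhds hx).mono fun y hy => max_eq_left hy.le)

theorem measureReal_pos_of_setIntegral_pos {α : Type*} [MeasurableSpace α] {μ : Measure α}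
    [IsFiniteMeasure μ] {s : Set α} {f : α → ℝ} (h : 0 < ∫ x in s, f x ∂μ) : 0 < μ.real s := by
  refine ENNReal.toReal_pos (fun hs => ?_) (measure_ne_top μ s)
  rw [Measure.restrict_eq_zero.2 hs, integral_zero_measure] at h
  exact h.false

noncomputable def lowerPartialMoment (μ : Measure ℝ) (ϑ : ℝ) : ℝ := ∫ y in Iio ϑ, (ϑ - y) ∂μ

noncomputable def upperPartialMoment (μ : Measure ℝ) (ϑ : ℝ) : ℝ := ∫ y in Ioi ϑ, (y - ϑ) ∂μ

theorem indicator_Iio_sub_eq_max (ϑ : ℝ) :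
    (Iio ϑ).indicator (fun y => ϑ - y) = fun y => max (ϑ - y) 0 := by
  ext y
  by_cases hy : y < ϑ
  · simp [hy, hy.le]
  · simp [hy, not_lt.1 hy]

theorem indicator_Ioi_sub_eq_max (ϑ : ℝ) :
    (Ioi ϑ).indicator (fun y => y - ϑ) = fun y => max (y - ϑ) 0 := by
  ext y
  by_cases hy : ϑ < y
  · simp [hy, hy.le]
  · simp [hy, not_lt.1 hy]

section

variable {μ : Measure ℝ} [IsFiniteMeasure μ] {θ : ℝ}

theorem hasDerivAt_integral_comp_sub {g g' : ℝ → ℝ} {K : ℝ≥0} (hg : LipschitzWith K g)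
    (hg' : ∀ x ≠ 0, HasDerivAt g (g' x) x) (hg'_meas : Measurable g')
    (hθ : μ {θ} = 0) (hint : Integrable (fun y => g (θ - y)) μ) :
    HasDerivAt (fun ϑ => ∫ y, g (ϑ - y) ∂μ) (∫ y, g' (θ - y) ∂μ) θ := by
  have hdiff : ∀ᵐ y ∂μ, HasDerivAt (fun ϑ => g (ϑ - y)) (g' (θ - y)) θ := by
    filter_upwards [measure_eq_zero_iff_ae_notMem.1 hθ] with y hy
    exact (hg' _ (sub_ne_zero.2 (Ne.symm hy))).comp_sub_const θ y
  refine (hasDerivAt_integral_of_dominated_loc_of_lip (F := fun ϑ y => g (ϑ - y))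
    (bound := fun _ => (K : ℝ)) univ_mem
    (Eventually.of_forall fun ϑ =>
      (hg.continuous.comp (continuous_const.sub continuous_id)).aestronglyMeasurable)
    hint (hg'_meas.comp (measurable_const.sub measurable_id)).aestronglyMeasurable
    (ae_of_all _ fun y => ?_) (integrable_const _) hdiff).2
  rw [Real.nnabs_coe]
  simpa [Function.comp_def] using
    (hg.comp (IsometryEquiv.subRight y).isometry.lipschitz).lipschitzOnWith (s := univ)

theorem hasDerivAt_lowerPartialMoment (hθ : μ {θ} = 0)
    (hint : IntegrableOn (fun y => θ - y) (Iio θ) μ) :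
    HasDerivAt (lowerPartialMoment μ) (μ.real (Iio θ)) θ := by
  rw [← integrable_indicator_iff measurableSet_Iio, indicator_Iio_sub_eq_max] at hint
  have h := hasDerivAt_integral_comp_sub (LipschitzWith.id.max_const 0)
    (fun _ hx => hasDerivAt_max_zero hx) (measurable_one.indicator measurableSet_Ioi) hθ hint
  have hF : lowerPartialMoment μ = fun ϑ => ∫ y, max (ϑ - y) 0 ∂μ := by
    ext ϑ
    rw [lowerPartialMoment, ← integral_indicator measurableSet_Iio, indicator_Iio_sub_eq_max]
  have hF' : (fun y => (Ioi 0).indicator (1 : ℝ → ℝ) (θ - y)) = (Iio θ).indicator 1 := by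
    ext y
    simp [indicator, sub_pos]
  rwa [hF, ← integral_indicator_one measurableSet_Iio, ← hF']

theorem hasDerivAt_upperPartialMoment (hθ : μ {θ} = 0)
    (hint : IntegrableOn (fun y => y - θ) (Ioi θ) μ) :
    HasDerivAt (upperPartialMoment μ) (-μ.real (Ioi θ)) θ := by
  rw [← integrable_indicator_iff measurableSet_Ioi, indicator_Ioi_sub_eq_max] at hint
  have hg' : ∀ x ≠ (0 : ℝ), HasDerivAt (fun x => max (-x) 0) (-(Ioi 0).indicator 1 (-x)) x :=
    fun x hx => by
      simpa [Function.comp_def] using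
        (hasDerivAt_max_zero (neg_ne_zero.2 hx)).comp x (hasDerivAt_neg x)
  have h := hasDerivAt_integral_comp_sub (g := fun x => max (-x) 0)
    (LipschitzWith.id.neg.max_const 0) hg'
    ((measurable_one.indicator measurableSet_Ioi).comp measurable_neg).neg hθ
    (by simpa only [neg_sub] using hint)
  simp only [neg_sub] at h
  have hF : upperPartialMoment μ = fun ϑ => ∫ y, max (y - ϑ) 0 ∂μ := by
    ext ϑ
    rw [upperPartialMoment, ← integral_indicator measurableSet_Ioi, indicator_Ioi_sub_eq_max]
  have hF' : (fun y => (Ioi 0).indicator (1 : ℝ → ℝ) (y - θ)) = (Ioi θ).indicator 1 := by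
    ext y
    simp [indicator, sub_pos]
  rwa [hF, ← integral_indicator_one measurableSet_Ioi, ← hF', ← integral_neg]

end

theorem derivative_of_t_and_its_inverse_general
    (ν : Measure ℝ) [IsProbabilityMeasure ν]
    (p : ℝ → ℝ)
    (hdens : ν = volume.withDensity (fun y => ENNReal.ofReal (p y)))
    (θ : ℝ)
    (hposU : 0 < ∫ y in Set.Ioi θ, (y - θ) ∂ν)
    (hposL : 0 < ∫ y in Set.Iio θ, (θ - y) ∂ν) :
    -- the function t(·) and auxiliary functionals
    (HasDerivAt
        (fun ϑ : ℝ => (∫ y in Set.Ioi ϑ, (y - ϑ) ∂ν) / (∫ y in Set.Iio ϑ, (ϑ - y) ∂ν))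
        (-(((∫ y in Set.Iio θ, (θ - y) ∂ν) * (ν (Set.Ioi θ)).toReal
            + (∫ y in Set.Ioi θ, (y - θ) ∂ν) * (ν (Set.Iic θ)).toReal)
          / (∫ y in Set.Iio θ, (θ - y) ∂ν) ^ 2)) θ)
    ∧
    (-(((∫ y in Set.Iio θ, (θ - y) ∂ν) * (ν (Set.Ioi θ)).toReal
        + (∫ y in Set.Ioi θ, (y - θ) ∂ν) * (ν (Set.Iic θ)).toReal)
      / (∫ y in Set.Iio θ, (θ - y) ∂ν) ^ 2) < 0)
    ∧
    -- inverse function theorem: any continuous local inverse Θ of t(·) is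
    -- differentiable at t(θ) with derivative -f₁(θ)² / g₁(θ)
    (∀ Θ : ℝ → ℝ,
      ContinuousAt Θ
        ((∫ y in Set.Ioi θ, (y - θ) ∂ν) / (∫ y in Set.Iio θ, (θ - y) ∂ν)) →
      Θ ((∫ y in Set.Ioi θ, (y - θ) ∂ν) / (∫ y in Set.Iio θ, (θ - y) ∂ν)) = θ →
      (∀ᶠ s in nhds ((∫ y in Set.Ioi θ, (y - θ) ∂ν) / (∫ y in Set.Iio θ, (θ - y) ∂ν)),
        (∫ y in Set.Ioi (Θ s), (y - Θ s) ∂ν) / (∫ y in Set.Iio (Θ s), (Θ s - y) ∂ν) = s) →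
      HasDerivAt Θ
        (-((∫ y in Set.Iio θ, (θ - y) ∂ν) ^ 2
          / ((∫ y in Set.Iio θ, (θ - y) ∂ν) * (ν (Set.Ioi θ)).toReal
             + (∫ y in Set.Ioi θ, (y - θ) ∂ν) * (ν (Set.Iio θ)).toReal)))
        ((∫ y in Set.Ioi θ, (y - θ) ∂ν) / (∫ y in Set.Iio θ, (θ - y) ∂ν))) := by
  have hatom : ν {θ} = 0 := hdens ▸ withDensity_absolutelyContinuous _ _ Real.volume_singleton
  have hIic : ν.real (Iic θ) = ν.real (Iio θ) := measureReal_congr (Iio_ae_eq_Iic' hatom).symm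
  set U := upperPartialMoment ν
  set L := lowerPartialMoment ν
  have ht : HasDerivAt (fun ϑ => U ϑ / L ϑ)
      (-((L θ * ν.real (Ioi θ) + U θ * ν.real (Iic θ)) / L θ ^ 2)) θ := by
    have hU' := hasDerivAt_upperPartialMoment hatom (.of_integral_ne_zero hposU.ne')
    have hL' := hasDerivAt_lowerPartialMoment hatom (.of_integral_ne_zero hposL.ne')
    refine (hU'.div hL' hposL.ne').congr_deriv ?_
    rw [hIic]
    ring
  have hneg : -((L θ * ν.real (Ioi θ) + U θ * ν.real (Iic θ)) / L θ ^ 2) < 0 := by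
    have hU : 0 < U θ := hposU
    have hL : 0 < L θ := hposL
    have hq := measureReal_pos_of_setIntegral_pos hposU
    have hr := measureReal_pos_of_setIntegral_pos hposL
    rw [hIic]
    exact neg_neg_of_pos (by positivity)
  refine ⟨ht, hneg, fun Θ hΘ hΘθ hinv => ?_⟩
  have ht' : HasDerivAt (fun ϑ => U ϑ / L ϑ)
      (-((L θ * ν.real (Ioi θ) + U θ * ν.real (Iic θ)) / L θ ^ 2)) (Θ (U θ / L θ)) := by
    rwa [show Θ (U θ / L θ) = θ from hΘθ]
  refine (ht'.of_local_left_inverse hΘ hneg.ne hinv).congr_deriv ?_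
  rw [hIic, inv_neg, inv_div]
  rfl

/-- Under the Leibniz-rule conditions, with `θ` such that both
truncated means are positive, `t(θ) = E[(Y-θ)1(Y>θ)] / E[(θ-Y)1(θ>Y)]` is
differentiable with strictly negative derivative
`t'(θ) = -[E[(θ-Y)1(θ>Y)]·P(Y>θ) + E[(Y-θ)1(Y>θ)]·P(Y≤θ)] / E[(θ-Y)1(θ>Y)]²`,
hence strictly decreasing near `θ`, and by the inverse function theorem any
local inverse `Θ` is differentiable at `t(θ)` with derivative
`-f₁(θ)² / g₁(θ)` where `f₁(θ) = E[(θ-Y)1(θ>Y)]` and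
`g₁(θ) = f₁(θ)·P(Y>θ) + E[(Y-θ)1(Y>θ)]·P(Y<θ)`. -/
theorem derivative_of_t_and_its_inverse
    (ν : Measure ℝ) [IsProbabilityMeasure ν]
    (p : ℝ → ℝ) (hp_nonneg : ∀ y, 0 ≤ p y)
    (hdens : ν = volume.withDensity (fun y => ENNReal.ofReal (p y)))
    (hp_cont : Continuous p) (hp_bdd : ∃ C, ∀ y, p y ≤ C)
    (B₁ B₂ : ℝ) (hsupp : ∀ y, y ∉ Set.Icc B₁ B₂ → p y = 0)
    (hnotpm : ∀ c : ℝ, ν ≠ Measure.dirac c)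
    (θ : ℝ)
    (hposU : 0 < ∫ y in Set.Ioi θ, (y - θ) ∂ν)
    (hposL : 0 < ∫ y in Set.Iio θ, (θ - y) ∂ν) :
    -- the function t(·) and auxiliary functionals
    (HasDerivAt
        (fun ϑ : ℝ => (∫ y in Set.Ioi ϑ, (y - ϑ) ∂ν) / (∫ y in Set.Iio ϑ, (ϑ - y) ∂ν))
        (-(((∫ y in Set.Iio θ, (θ - y) ∂ν) * (ν (Set.Ioi θ)).toReal
            + (∫ y in Set.Ioi θ, (y - θ) ∂ν) * (ν (Set.Iic θ)).toReal)
          / (∫ y in Set.Iio θ, (θ - y) ∂ν) ^ 2)) θ)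
    ∧
    (-(((∫ y in Set.Iio θ, (θ - y) ∂ν) * (ν (Set.Ioi θ)).toReal
        + (∫ y in Set.Ioi θ, (y - θ) ∂ν) * (ν (Set.Iic θ)).toReal)
      / (∫ y in Set.Iio θ, (θ - y) ∂ν) ^ 2) < 0)
    ∧
    -- inverse function theorem: any continuous local inverse Θ of t(·) is
    -- differentiable at t(θ) with derivative -f₁(θ)² / g₁(θ)
    (∀ Θ : ℝ → ℝ,
      ContinuousAt Θ
        ((∫ y in Set.Ioi θ, (y - θ) ∂ν) / (∫ y in Set.Iio θ, (θ - y) ∂ν)) →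
      Θ ((∫ y in Set.Ioi θ, (y - θ) ∂ν) / (∫ y in Set.Iio θ, (θ - y) ∂ν)) = θ →
      (∀ᶠ s in nhds ((∫ y in Set.Ioi θ, (y - θ) ∂ν) / (∫ y in Set.Iio θ, (θ - y) ∂ν)),
        (∫ y in Set.Ioi (Θ s), (y - Θ s) ∂ν) / (∫ y in Set.Iio (Θ s), (Θ s - y) ∂ν) = s) →
      HasDerivAt Θ
        (-((∫ y in Set.Iio θ, (θ - y) ∂ν) ^ 2
          / ((∫ y in Set.Iio θ, (θ - y) ∂ν) * (ν (Set.Ioi θ)).toReal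
             + (∫ y in Set.Ioi θ, (y - θ) ∂ν) * (ν (Set.Iio θ)).toReal)))
        ((∫ y in Set.Ioi θ, (y - θ) ∂ν) / (∫ y in Set.Iio θ, (θ - y) ∂ν))) :=
  derivative_of_t_and_its_inverse_general ν p hdens θ hposU hposL
end

section
/- In the data generating process X ~ Uniform(−1,1), W ~ Uniform(−1,1) independent, A | X, W ~ Bernoulli((X + W + 2)/4), Y = X + W + ε with ε ~ N(0,1) independent noise, the unadjusted mean difference ψ_∅ = E(Y | A=1) − E(Y | A=0) equals 2/3. Consequently, with ψ_X = (log 3)/3, the interval [ψ_X − |ψ_X − ψ_∅|, ψ_X + |ψ_X − ψ_∅|] ≈ [0.066, 0.667] does not contain the true ATE ψ* = 0. -/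
/-!
Conditioning on `(X, W)` and pulling out `S = X + W`, the propensity `(S + 2) / 4` gives
`E[A] = (E[S] + 2) / 4 = 1/2` and `E[S A] = (E[S²] + 2 E[S]) / 4 = 1/6`, because `S` is centred
with `E[S²] = E[X²] + E[W²] = 2/3` by independence. The noise `e` is centred and independent
of `A`, so `E[Y A] = 1/6` and `E[Y] = 0`; the treated and control means are therefore `1/3`
and `-1/3`. Since `log 3 > 1`, `ψ_∅ = 2/3` lies strictly between `0` and `2 ψ_X`, so the
interval `[ψ_X - |ψ_X - ψ_∅|, ψ_X + |ψ_X - ψ_∅|]` lies to the right of `0`.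
-/

open MeasureTheory ProbabilityTheory Set
open scoped ENNReal

noncomputable def uniformNegOneOne : Measure ℝ := (2 : ℝ≥0∞)⁻¹ • volume.restrict (Ioo (-1 : ℝ) 1)

lemma integral_uniformNegOneOne (f : ℝ → ℝ) :
    ∫ x, f x ∂uniformNegOneOne = 2⁻¹ * ∫ x in (-1 : ℝ)..1, f x := by
  rw [uniformNegOneOne, integral_smul_measure, intervalIntegral.integral_of_le (by norm_num),
    Measure.restrict_congr_set Ioo_ae_eq_Ioc]
  simp

lemma integral_id_uniformNegOneOne : ∫ x, x ∂uniformNegOneOne = 0 := by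
  simp [integral_uniformNegOneOne]

lemma integral_sq_uniformNegOneOne : ∫ x, x ^ 2 ∂uniformNegOneOne = 1 / 3 := by
  rw [integral_uniformNegOneOne, integral_pow]
  norm_num

lemma ae_abs_le_one_uniformNegOneOne : ∀ᵐ x ∂uniformNegOneOne, |x| ≤ 1 :=
  Measure.ae_smul_measure (ae_restrict_of_forall_mem measurableSet_Ioo fun _ hx =>
    abs_le.2 ⟨hx.1.le, hx.2.le⟩) _

namespace ProbabilityTheory.HasLaw

variable {Ω : Type*} {mΩ : MeasurableSpace Ω} {P : Measure Ω}

lemma integrable_of_integrable_id {E : Type*} [NormedAddCommGroup E] [MeasurableSpace E]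
    {μ : Measure E} {Z : Ω → E} (hZ : HasLaw Z μ P) (h : Integrable id μ) : Integrable Z P :=
  (hZ.map_eq ▸ h).comp_aemeasurable hZ.aemeasurable

variable {Z : Ω → ℝ}

lemma memLp_top_of_uniformNegOneOne (hZ : HasLaw Z uniformNegOneOne P) : MemLp Z ∞ P :=
  memLp_top_of_bound hZ.aemeasurable.aestronglyMeasurable 1 <|
    ae_of_ae_map hZ.aemeasurable (hZ.map_eq ▸ ae_abs_le_one_uniformNegOneOne)

lemma integral_eq_zero_of_uniformNegOneOne (hZ : HasLaw Z uniformNegOneOne P) :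
    ∫ ω, Z ω ∂P = 0 :=
  hZ.integral_eq.trans integral_id_uniformNegOneOne

lemma integral_sq_of_uniformNegOneOne (hZ : HasLaw Z uniformNegOneOne P) :
    ∫ ω, Z ω ^ 2 ∂P = 1 / 3 :=
  (hZ.integral_comp (continuous_pow 2).aestronglyMeasurable).trans integral_sq_uniformNegOneOne

end ProbabilityTheory.HasLaw

section

variable {Ω : Type*} {mΩ : MeasurableSpace Ω} {P : Measure Ω}

lemma ProbabilityTheory.IndepFun.integral_add_sq {X W : Ω → ℝ} (hXW : IndepFun X W P)
    (hX : MemLp X 2 P) (hW : MemLp W 2 P) :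
    ∫ ω, (X ω + W ω) ^ 2 ∂P
      = ∫ ω, X ω ^ 2 ∂P + 2 * ((∫ ω, X ω ∂P) * ∫ ω, W ω ∂P) + ∫ ω, W ω ^ 2 ∂P := by
  have hXW' : Integrable (fun ω => 2 * (X ω * W ω)) P := (hX.integrable_mul hW).const_mul 2
  simp_rw [add_sq, mul_assoc]
  rw [integral_add (by exact hX.integrable_sq.add hXW') hW.integrable_sq,
    integral_add hX.integrable_sq hXW', integral_const_mul,
    hXW.integral_fun_mul_eq_mul_integral hX.aestronglyMeasurable hW.aestronglyMeasurable]

lemma integral_mul_eq_of_condExp_ae_eq {m : MeasurableSpace Ω} [IsFiniteMeasure P] (hm : m ≤ mΩ)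
    {g A f : Ω → ℝ} (hg : StronglyMeasurable[m] g) (hgA : Integrable (g * A) P)
    (hA : Integrable A P) (h : P[A|m] =ᵐ[P] f) :
    ∫ ω, g ω * A ω ∂P = ∫ ω, g ω * f ω ∂P := calc
  ∫ ω, g ω * A ω ∂P = ∫ ω, P[g * A|m] ω ∂P := (integral_condExp hm).symm
  _ = ∫ ω, g ω * f ω ∂P := integral_congr_ae <|
    (condExp_mul_of_stronglyMeasurable_left hg hgA hA).trans (h.mono fun ω hω => by simp [hω])

lemma integral_add_mul_eq_of_indepFun {S e A : Ω → ℝ} (hSA : Integrable (fun ω => S ω * A ω) P)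
    (he : Integrable e P) (hA : MemLp A ∞ P) (hAe : IndepFun A e P) (he0 : ∫ ω, e ω ∂P = 0) :
    ∫ ω, (S ω + e ω) * A ω ∂P = ∫ ω, S ω * A ω ∂P := by
  have heA : ∫ ω, e ω * A ω ∂P = 0 := by
    simp_rw [mul_comm (e _)]
    rw [hAe.integral_fun_mul_eq_mul_integral hA.aestronglyMeasurable he.aestronglyMeasurable, he0,
      mul_zero]
  simp_rw [add_mul]
  rw [integral_add hSA (by exact he.mul_of_top_left hA), heA, add_zero]

lemma integral_mul_one_sub {Y A : Ω → ℝ} (hY : Integrable Y P)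
    (hYA : Integrable (fun ω => Y ω * A ω) P) :
    ∫ ω, Y ω * (1 - A ω) ∂P = ∫ ω, Y ω ∂P - ∫ ω, Y ω * A ω ∂P := by
  simp_rw [mul_one_sub]
  exact integral_sub hY hYA

variable [IsProbabilityMeasure P]

lemma integral_one_sub {A : Ω → ℝ} (hA : Integrable A P) :
    ∫ ω, (1 - A ω) ∂P = 1 - ∫ ω, A ω ∂P := by
  rw [integral_sub (integrable_const 1) hA, integral_const, probReal_univ, one_smul]

lemma integral_eq_of_condExp_ae_eq_propensity {m : MeasurableSpace Ω} (hm : m ≤ mΩ)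
    {S A : Ω → ℝ} (hS : Integrable S P) (h : P[A|m] =ᵐ[P] fun ω => (S ω + 2) / 4) :
    ∫ ω, A ω ∂P = (∫ ω, S ω ∂P + 2) / 4 := by
  rw [← integral_condExp hm, integral_congr_ae h, integral_div,
    integral_add hS (integrable_const 2), integral_const, probReal_univ, one_smul]

lemma integral_mul_eq_of_condExp_ae_eq_propensity {m : MeasurableSpace Ω} (hm : m ≤ mΩ)
    {S A : Ω → ℝ} (hS : StronglyMeasurable[m] S) (hSm : MemLp S ∞ P) (hAm : MemLp A ∞ P)
    (h : P[A|m] =ᵐ[P] fun ω => (S ω + 2) / 4) :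
    ∫ ω, S ω * A ω ∂P = (∫ ω, S ω ^ 2 ∂P + 2 * ∫ ω, S ω ∂P) / 4 := by
  have hSi : Integrable S P := hSm.integrable le_top
  have hS2 : Integrable (fun ω => S ω ^ 2) P := (hSm.mono_exponent (p := 2) le_top).integrable_sq
  rw [integral_mul_eq_of_condExp_ae_eq hm hS ((hAm.integrable le_top).mul_of_top_right hSm)
    (hAm.integrable le_top) h]
  simp_rw [mul_div_assoc', mul_add, ← sq, mul_comm (S _) 2]
  rw [integral_div, integral_add hS2 (hSi.const_mul 2), integral_const_mul]

variable {X W A : Ω → ℝ}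

lemma integral_add_of_uniformNegOneOne (hX : HasLaw X uniformNegOneOne P)
    (hW : HasLaw W uniformNegOneOne P) : ∫ ω, X ω + W ω ∂P = 0 := by
  rw [integral_add (hX.memLp_top_of_uniformNegOneOne.integrable le_top)
    (hW.memLp_top_of_uniformNegOneOne.integrable le_top),
    hX.integral_eq_zero_of_uniformNegOneOne, hW.integral_eq_zero_of_uniformNegOneOne, add_zero]

lemma integral_add_sq_of_uniformNegOneOne (hX : HasLaw X uniformNegOneOne P)
    (hW : HasLaw W uniformNegOneOne P) (hXW : IndepFun X W P) :
    ∫ ω, (X ω + W ω) ^ 2 ∂P = 2 / 3 := by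
  rw [hXW.integral_add_sq (hX.memLp_top_of_uniformNegOneOne.mono_exponent le_top)
    (hW.memLp_top_of_uniformNegOneOne.mono_exponent le_top),
    hX.integral_sq_of_uniformNegOneOne, hW.integral_sq_of_uniformNegOneOne,
    hX.integral_eq_zero_of_uniformNegOneOne]
  norm_num

lemma integral_treatment_of_uniformNegOneOne (hXm : Measurable X) (hWm : Measurable W)
    (hX : HasLaw X uniformNegOneOne P) (hW : HasLaw W uniformNegOneOne P) (hXW : IndepFun X W P)
    (hA : MemLp A ∞ P)
    (h : P[A | MeasurableSpace.comap (fun ω => (X ω, W ω)) inferInstance]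
      =ᵐ[P] fun ω => (X ω + W ω + 2) / 4) :
    ∫ ω, A ω ∂P = 1 / 2 ∧ ∫ ω, (X ω + W ω) * A ω ∂P = 1 / 6 := by
  have hm := (hXm.prodMk hWm).comap_le
  have hS : MemLp (fun ω => X ω + W ω) ∞ P :=
    hX.memLp_top_of_uniformNegOneOne.add hW.memLp_top_of_uniformNegOneOne
  have hXWm : Measurable[MeasurableSpace.comap (fun ω => (X ω, W ω)) inferInstance]
      fun ω => (X ω, W ω) := comap_measurable _
  constructor
  · rw [integral_eq_of_condExp_ae_eq_propensity hm (hS.integrable le_top) h,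
      integral_add_of_uniformNegOneOne hX hW]
    norm_num
  · rw [integral_mul_eq_of_condExp_ae_eq_propensity hm
      (by exact (hXWm.fst.add hXWm.snd).stronglyMeasurable) hS hA h,
      integral_add_sq_of_uniformNegOneOne hX hW hXW, integral_add_of_uniformNegOneOne hX hW]
    norm_num

end

lemma one_lt_log_three : 1 < Real.log 3 :=
  (Real.lt_log_iff_exp_lt (by norm_num)).2 Real.exp_one_lt_three

lemma zero_notMem_Icc_sub_abs_add_abs {a b : ℝ} (hb : 0 < b) (hba : b < 2 * a) :
    (0 : ℝ) ∉ Icc (a - |a - b|) (a + |a - b|) := by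
  rintro ⟨hlo, -⟩
  cases abs_cases (a - b) <;> linarith

/-- In the DGP of Statement 12, the unadjusted mean difference
`ψ_∅ = E(Y | A=1) - E(Y | A=0)` equals `2/3`; consequently, with
`ψ_X = (log 3)/3`, the interval `[ψ_X - |ψ_X - ψ_∅|, ψ_X + |ψ_X - ψ_∅|]`
does not contain the true ATE `ψ* = 0`. -/
theorem unadjusted_difference_and_failed_benchmarking
    {Ω : Type*} {mΩ : MeasurableSpace Ω} (P : Measure Ω) [IsProbabilityMeasure P]
    (X W e A Y : Ω → ℝ)
    (hX : Measurable X) (hW : Measurable W) (he : Measurable e) (hA : Measurable A)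
    (hXlaw : Measure.map X P = (2 : ENNReal)⁻¹ • volume.restrict (Set.Ioo (-1:ℝ) 1))
    (hWlaw : Measure.map W P = (2 : ENNReal)⁻¹ • volume.restrict (Set.Ioo (-1:ℝ) 1))
    (hXW : IndepFun X W P)
    (hA01 : ∀ ω, A ω = 0 ∨ A ω = 1)
    (hAcond : P[A | MeasurableSpace.comap (fun ω => (X ω, W ω)) inferInstance]
      =ᵐ[P] fun ω => (X ω + W ω + 2) / 4)
    (helaw : Measure.map e P = gaussianReal 0 1)
    (heInd : IndepFun (fun ω => (X ω, W ω, A ω)) e P)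
    (hY : ∀ ω, Y ω = X ω + W ω + e ω) :
    ((∫ ω, Y ω * A ω ∂P) / (∫ ω, A ω ∂P)
        - (∫ ω, Y ω * (1 - A ω) ∂P) / (∫ ω, (1 - A ω) ∂P) = 2 / 3) ∧
    ((0:ℝ) ∉ Set.Icc (Real.log 3 / 3 - |Real.log 3 / 3 - 2 / 3|)
        (Real.log 3 / 3 + |Real.log 3 / 3 - 2 / 3|)) := by
  refine ⟨?_, zero_notMem_Icc_sub_abs_add_abs (by norm_num) (by linarith [one_lt_log_three])⟩
  have hXl : HasLaw X uniformNegOneOne P := ⟨hX.aemeasurable, hXlaw⟩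
  have hWl : HasLaw W uniformNegOneOne P := ⟨hW.aemeasurable, hWlaw⟩
  have hel : HasLaw e (gaussianReal 0 1) P := ⟨he.aemeasurable, helaw⟩
  have hAm : MemLp A ∞ P := memLp_top_of_bound hA.aestronglyMeasurable 1 <|
    ae_of_all _ fun ω => by rcases hA01 ω with h | h <;> simp [h]
  obtain ⟨EA, ESA⟩ := integral_treatment_of_uniformNegOneOne hX hW hXl hWl hXW hAm hAcond
  have hSm : MemLp (fun ω => X ω + W ω) ∞ P :=
    hXl.memLp_top_of_uniformNegOneOne.add hWl.memLp_top_of_uniformNegOneOne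
  have hSi : Integrable (fun ω => X ω + W ω) P := hSm.integrable le_top
  have hei : Integrable e P :=
    hel.integrable_of_integrable_id ((memLp_id_gaussianReal 1).integrable le_rfl)
  have he0 : ∫ ω, e ω ∂P = 0 := hel.integral_eq.trans integral_id_gaussianReal
  have hAe : IndepFun A e P := heInd.comp (measurable_snd.comp measurable_snd) measurable_id
  have hYi : Integrable Y P := (hSi.add hei).congr (ae_of_all _ fun ω => (hY ω).symm)
  have EY : ∫ ω, Y ω ∂P = 0 := by
    simp_rw [hY]
    rw [integral_add hSi hei, integral_add_of_uniformNegOneOne hXl hWl, he0, add_zero]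
  have EYA : ∫ ω, Y ω * A ω ∂P = 1 / 6 := by
    simp_rw [hY]
    rw [integral_add_mul_eq_of_indepFun (by exact (hAm.integrable le_top).mul_of_top_right hSm)
      hei hAm hAe he0, ESA]
  rw [integral_mul_one_sub hYi (by exact hYi.mul_of_top_left hAm),
    integral_one_sub (hAm.integrable le_top), EY, EYA, EA]
  norm_num
end
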